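/- Let (X_n)_{n∈ℕ} be i.i.d. real random variables whose common law is not a Dirac mass, and set S_n = Σ_{i=1}^n (X_{2i−1} − X_{2i}). Then for every constant C > 0, lim_{n→∞} P(S_n ≥ C) = 1/2 and lim_{n→∞} P(S_n ≤ −C) = 1/2. -/

import Mathlib

open MeasureTheory ProbabilityTheory Filter Set
open scoped ENNReal

set_option linter.unusedSectionVars false
set_option maxHeartbeats 1000000

section Aux

variable {Ω : Type} [MeasureSpace Ω] [IsProbabilityMeasure (ℙ : Measure Ω)]

lemma aux_pair_indep (X : ℕ → Ω → ℝ) (hmX : ∀ n, Measurable (X n))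
    (hindep : iIndepFun X ℙ) :
    iIndepFun
      (fun j ω => (X (2*j) ω, X (2*j+1) ω)) ℙ := by
  classical
  rw [iIndepFun_iff_iIndep]
  set π : ℕ → Set (Set Ω) := fun j =>
    {s | ∃ B1 B2 : Set ℝ, MeasurableSet B1 ∧ MeasurableSet B2 ∧
      s = X (2*j) ⁻¹' B1 ∩ X (2*j+1) ⁻¹' B2} with hπ
  have hcomap : ∀ j : ℕ, (MeasurableSpace.comap (fun ω => (X (2*j) ω, X (2*j+1) ω))
      (inferInstance : MeasurableSpace (ℝ × ℝ)))
      = MeasurableSpace.generateFrom (π j) := by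
    intro j
    apply le_antisymm
    · rw [show (inferInstance : MeasurableSpace (ℝ × ℝ)) =
        MeasurableSpace.comap Prod.fst Real.measurableSpace ⊔
        MeasurableSpace.comap Prod.snd Real.measurableSpace from rfl]
      rw [MeasurableSpace.comap_sup, MeasurableSpace.comap_comp, MeasurableSpace.comap_comp]
      apply sup_le
      · rw [← measurable_iff_comap_le]
        intro B hB
        exact MeasurableSpace.measurableSet_generateFrom
          ⟨B, univ, hB, MeasurableSet.univ, by ext ω; simp [Function.comp]⟩
      · rw [← measurable_iff_comap_le]
        intro B hB
        exact MeasurableSpace.measurableSet_generateFrom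
          ⟨univ, B, MeasurableSet.univ, hB, by ext ω; simp [Function.comp]⟩
    · rw [MeasurableSpace.generateFrom_le_iff]
      rintro s ⟨B1, B2, hB1, hB2, rfl⟩
      exact ⟨(B1 ×ˢ B2), hB1.prod hB2, by ext ω; simp [Set.mem_prod]⟩
  have h_pi : ∀ j, IsPiSystem (π j) := by
    rintro j s ⟨B1, B2, hB1, hB2, rfl⟩ t ⟨C1, C2, hC1, hC2, rfl⟩ -
    exact ⟨B1 ∩ C1, B2 ∩ C2, hB1.inter hC1, hB2.inter hC2, by
      ext ω; simp; tauto⟩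
  have h_le : ∀ j : ℕ, (MeasurableSpace.comap (fun ω => (X (2*j) ω, X (2*j+1) ω))
      (inferInstance : MeasurableSpace (ℝ × ℝ))) ≤ (inferInstance : MeasurableSpace Ω) := by
    intro j
    rw [hcomap j, MeasurableSpace.generateFrom_le_iff]
    rintro s ⟨B1, B2, hB1, hB2, rfl⟩
    exact ((hmX _ hB1).inter (hmX _ hB2))
  refine iIndepSets.iIndep h_le π h_pi hcomap ?_
  · -- iIndepSets π ℙ
    rw [iIndepSets_iff]
    intro s f' hf'
    have hex : ∀ j : ℕ, ∃ B : Set ℝ × Set ℝ, MeasurableSet B.1 ∧ MeasurableSet B.2 ∧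
        (j ∈ s → f' j = X (2*j) ⁻¹' B.1 ∩ X (2*j+1) ⁻¹' B.2) := by
      intro j
      by_cases hj : j ∈ s
      · obtain ⟨B1, B2, h1, h2, he⟩ := hf' j hj
        exact ⟨(B1, B2), h1, h2, fun _ => he⟩
      · exact ⟨(univ, univ), .univ, .univ, fun h => absurd h hj⟩
    choose B hB1 hB2 heq using hex
    set g : ℕ → Set Ω := fun i =>
      X i ⁻¹' (if Even i then (B (i/2)).1 else (B (i/2)).2) with hg
    set T : Finset ℕ := s.biUnion (fun j => {2*j, 2*j+1}) with hT
    have hgj : ∀ j ∈ s, g (2*j) = X (2*j) ⁻¹' (B j).1 ∧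
        g (2*j+1) = X (2*j+1) ⁻¹' (B j).2 := by
      intro j _
      constructor
      · simp only [hg]
        rw [if_pos (even_two_mul j), Nat.mul_div_cancel_left j (by norm_num)]
      · simp only [hg]
        rw [if_neg (by simp [Nat.even_add_one, Nat.even_mul]),
          show (2*j+1)/2 = j by omega]
    have hinter : (⋂ j ∈ s, f' j) = ⋂ i ∈ T, g i := by
      rw [hT, Finset.set_biInter_biUnion]
      apply Set.iInter₂_congr
      intro j hj
      rw [Finset.set_biInter_insert, Finset.set_biInter_singleton,
        (hgj j hj).1, (hgj j hj).2, heq j hj]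
    have hmeas : ∀ i ∈ T, MeasurableSet[MeasurableSpace.comap (X i) Real.measurableSpace]
        (g i) := by
      intro i _
      exact ⟨_, by split <;> [exact hB1 _; exact hB2 _], rfl⟩
    rw [hinter, hindep.meas_biInter hmeas, hT, Finset.prod_biUnion]
    · apply Finset.prod_congr rfl
      intro j hj
      rw [Finset.prod_insert (by simp), Finset.prod_singleton, (hgj j hj).1, (hgj j hj).2,
        heq j hj]
      exact ((hindep.indepFun (show 2*j ≠ 2*j+1 by omega)).measure_inter_preimage_eq_mul
        _ _ (hB1 j) (hB2 j)).symm
    · intro x hx y hy hxy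
      simp only [Finset.disjoint_left, Finset.mem_insert, Finset.mem_singleton]
      rintro a (rfl | rfl) (h | h) <;> omega

lemma aux_vec_symm (Y : ℕ → Ω → ℝ) (hmY : ∀ i, Measurable (Y i))
    (hind : iIndepFun Y ℙ)
    (hsym : ∀ i, Measure.map (Y i) ℙ = Measure.map (fun ω => -(Y i ω)) ℙ)
    (k : ℕ) : ∀ N : ℕ,
    Measure.map (fun ω (i : Fin N) => Y (k + i) ω) ℙ
      = Measure.map (fun ω (i : Fin N) => -(Y (k + i) ω)) ℙ := by
  intro N
  induction N with
  | zero => congr 1; funext ω; exact funext fun i => i.elim0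
  | succ N ih =>
    set v : Ω → (Fin N → ℝ) := fun ω i => Y (k + i) ω with hv
    have hmv : Measurable v := measurable_pi_lambda _ (fun i => hmY _)
    have hmpair : Measurable (fun ω => (v ω, Y (k + N) ω)) := hmv.prodMk (hmY _)
    have hIndep : IndepFun v (Y (k + N)) ℙ := by
      have hdisj : Disjoint (Finset.image (fun i => k + i) (Finset.range N))
          ({k + N} : Finset ℕ) := by
        simp only [Finset.disjoint_left, Finset.mem_image, Finset.mem_range,
          Finset.mem_singleton]
        rintro a ⟨i, hi, rfl⟩ h
        omega
      have h := hind.indepFun_finset _ _ hdisj hmY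
      have h2 := h.comp (φ := fun w : ((Finset.image (fun i => k + i) (Finset.range N) :
            Finset ℕ) → ℝ) => fun i : Fin N => w ⟨k + i, by
              simp only [Finset.mem_coe, Finset.mem_image, Finset.mem_range]
              exact ⟨i, i.2, rfl⟩⟩)
        (ψ := fun w : (({k + N} : Finset ℕ) : Finset ℕ) → ℝ => w ⟨k + N, by simp⟩)
        (measurable_pi_lambda _ (fun i => measurable_pi_apply _))
        (measurable_pi_apply (X := fun _ => ℝ) _)
      exact h2
    have hsnoc : Measurable (fun p : (Fin N → ℝ) × ℝ => (Fin.snoc p.1 p.2 : Fin (N+1) → ℝ)) := by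
      apply measurable_pi_lambda
      intro i
      induction i using Fin.lastCases with
      | last => simpa using measurable_snd
      | cast j => simpa using (show Measurable fun c : (Fin N → ℝ) × ℝ => c.1 j from
          (measurable_pi_apply j).comp measurable_fst)
    have key : (fun ω (i : Fin (N+1)) => Y (k + i) ω)
        = (fun p : (Fin N → ℝ) × ℝ => (Fin.snoc p.1 p.2 : Fin (N+1) → ℝ))
          ∘ (fun ω => (v ω, Y (k + N) ω)) := by
      funext ω
      refine funext fun i => ?_
      induction i using Fin.lastCases with
      | last => simp
      | cast j => simp [hv]
    have keyneg : (fun ω (i : Fin (N+1)) => -(Y (k + i) ω))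
        = (fun p : (Fin N → ℝ) × ℝ => (Fin.snoc p.1 p.2 : Fin (N+1) → ℝ))
          ∘ ((Prod.map (fun x : Fin N → ℝ => -x) (fun x : ℝ => -x))
            ∘ (fun ω => (v ω, Y (k + N) ω))) := by
      funext ω
      refine funext fun i => ?_
      induction i using Fin.lastCases with
      | last => simp
      | cast j => simp [hv]
    have hprodmap : Measure.map (fun ω => (v ω, Y (k + N) ω)) ℙ
        = (Measure.map v ℙ).prod (Measure.map (Y (k + N)) ℙ) :=
      (indepFun_iff_map_prod_eq_prod_map_map hmv.aemeasurable (hmY _).aemeasurable).1 hIndep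
    have hnegv : Measure.map (fun x : Fin N → ℝ => -x) (Measure.map v ℙ) = Measure.map v ℙ := by
      rw [Measure.map_map measurable_neg hmv]
      exact ih.symm
    have hnegy : Measure.map (fun x : ℝ => -x) (Measure.map (Y (k + N)) ℙ)
        = Measure.map (Y (k + N)) ℙ := by
      rw [Measure.map_map measurable_neg (hmY _)]
      exact (hsym _).symm
    haveI : IsProbabilityMeasure (Measure.map v ℙ) := Measure.isProbabilityMeasure_map hmv.aemeasurable
    haveI : IsProbabilityMeasure (Measure.map (Y (k + N)) ℙ) :=
      Measure.isProbabilityMeasure_map (hmY _).aemeasurable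
    rw [key, keyneg]
    rw [← Measure.map_map hsnoc hmpair,
      ← Measure.map_map hsnoc ((measurable_neg.prodMap measurable_neg).comp hmpair),
      ← Measure.map_map (measurable_neg.prodMap measurable_neg) hmpair,
      hprodmap, ← Measure.map_prod_map _ _ measurable_neg measurable_neg, hnegv, hnegy]

lemma aux_symm_event (Y : ℕ → Ω → ℝ) (hmY : ∀ i, Measurable (Y i))
    (hind : iIndepFun Y ℙ)
    (hsym : ∀ i, Measure.map (Y i) ℙ = Measure.map (fun ω => -(Y i ω)) ℙ)
    (k N : ℕ) {B : Set (Fin N → ℝ)} (hB : MeasurableSet B) :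
    ℙ {ω | (fun i : Fin N => Y (k + i) ω) ∈ B}
      = ℙ {ω | (fun i : Fin N => -(Y (k + i) ω)) ∈ B} := by
  have h := congrArg (fun μ : Measure (Fin N → ℝ) => μ B) (aux_vec_symm Y hmY hind hsym k N)
  rwa [Measure.map_apply (measurable_pi_lambda _ (fun i => hmY _)) hB,
    Measure.map_apply (measurable_pi_lambda (fun ω (i : Fin N) => -(Y (k + i) ω)) (fun i => (hmY _).neg)) hB] at h

-- the sum over Ico k n has symmetric law; in particular ℙ(0 ≤ sum) ≥ 1/2

lemma aux_half (Y : ℕ → Ω → ℝ) (hmY : ∀ i, Measurable (Y i))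
    (hind : iIndepFun Y ℙ)
    (hsym : ∀ i, Measure.map (Y i) ℙ = Measure.map (fun ω => -(Y i ω)) ℙ)
    (k n : ℕ) :
    1/2 ≤ ℙ {ω | 0 ≤ ∑ i ∈ Finset.Ico k n, Y i ω} := by
  set N := n - k with hN
  have hrw : ∀ ω, ∑ i ∈ Finset.Ico k n, Y i ω = ∑ i : Fin N, Y (k + i) ω := by
    intro ω
    rw [Finset.sum_Ico_eq_sum_range, Fin.sum_univ_eq_sum_range (fun i => Y (k + i) ω) N]
  have hBmeas : MeasurableSet {v : Fin N → ℝ | 0 ≤ ∑ i, v i} :=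
    measurableSet_le measurable_const (Finset.measurable_sum _ (fun i _ => measurable_pi_apply i))
  have h := aux_symm_event Y hmY hind hsym k N hBmeas
  have h1 : ℙ {ω | 0 ≤ ∑ i ∈ Finset.Ico k n, Y i ω}
      = ℙ {ω | (fun i : Fin N => Y (k + i) ω) ∈ {v : Fin N → ℝ | 0 ≤ ∑ i, v i}} := by
    congr 1; ext ω; simp [hrw ω]
  have h2 : ℙ {ω | (fun i : Fin N => -(Y (k + i) ω)) ∈ {v : Fin N → ℝ | 0 ≤ ∑ i, v i}}
      = ℙ {ω | ∑ i ∈ Finset.Ico k n, Y i ω ≤ 0} := by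
    congr 1; ext ω
    simp only [Set.mem_setOf_eq, Finset.sum_neg_distrib]
    rw [hrw ω]
    constructor <;> intro <;> linarith
  have hcover : (1 : ℝ≥0∞) ≤ ℙ {ω | 0 ≤ ∑ i ∈ Finset.Ico k n, Y i ω}
      + ℙ {ω | ∑ i ∈ Finset.Ico k n, Y i ω ≤ 0} := by
    have : (Set.univ : Set Ω) ⊆ {ω | 0 ≤ ∑ i ∈ Finset.Ico k n, Y i ω}
        ∪ {ω | ∑ i ∈ Finset.Ico k n, Y i ω ≤ 0} := by
      intro ω _
      rcases le_total 0 (∑ i ∈ Finset.Ico k n, Y i ω) with h | h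
      · exact Or.inl h
      · exact Or.inr h
    calc (1 : ℝ≥0∞) = ℙ (Set.univ : Set Ω) := (measure_univ).symm
      _ ≤ ℙ ({ω | 0 ≤ ∑ i ∈ Finset.Ico k n, Y i ω} ∪ {ω | ∑ i ∈ Finset.Ico k n, Y i ω ≤ 0}) :=
          measure_mono this
      _ ≤ _ := measure_union_le _ _
  have heq : ℙ {ω | ∑ i ∈ Finset.Ico k n, Y i ω ≤ 0}
      = ℙ {ω | 0 ≤ ∑ i ∈ Finset.Ico k n, Y i ω} := by
    rw [h1, h, h2]
  rw [heq] at hcover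
  rw [ENNReal.div_le_iff (by norm_num) (by norm_num)]
  calc (1:ℝ≥0∞) ≤ _ + _ := hcover
    _ = ℙ {ω | 0 ≤ ∑ i ∈ Finset.Ico k n, Y i ω} * 2 := by ring

lemma aux_levy (Y : ℕ → Ω → ℝ) (hmY : ∀ i, Measurable (Y i))
    (hind : iIndepFun Y ℙ)
    (hsym : ∀ i, Measure.map (Y i) ℙ = Measure.map (fun ω => -(Y i ω)) ℙ)
    (C : ℝ) (n : ℕ) :
    ℙ {ω | ∃ k ≤ n, C ≤ ∑ i ∈ Finset.range k, Y i ω}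
      ≤ 2 * ℙ {ω | C ≤ ∑ i ∈ Finset.range n, Y i ω} := by
  classical
  set S : ℕ → Ω → ℝ := fun k ω => ∑ i ∈ Finset.range k, Y i ω with hS
  set E : ℕ → Set Ω := fun k =>
    {ω | C ≤ S k ω} ∩ ⋂ (j : ℕ) (_ : j < k), {ω | S j ω < C} with hE
  set F : ℕ → Set Ω := fun k => {ω | 0 ≤ ∑ i ∈ Finset.Ico k n, Y i ω} with hF
  have hmS : ∀ j, Measurable (S j) :=
    fun j => Finset.measurable_sum _ (fun i _ => hmY i)
  have hEmeas : ∀ k, MeasurableSet (E k) := by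
    intro k
    exact (measurableSet_le measurable_const (hmS k)).inter
      (MeasurableSet.iInter fun j => MeasurableSet.iInter fun _ =>
        measurableSet_lt (hmS j) measurable_const)
  have hFmeas : ∀ k, MeasurableSet (F k) :=
    fun k => measurableSet_le measurable_const (Finset.measurable_sum _ (fun i _ => hmY i))
  -- decomposition of the max event
  have hunion : {ω | ∃ k ≤ n, C ≤ S k ω} = ⋃ k ∈ Finset.range (n+1), E k := by
    ext ω
    simp only [Set.mem_setOf_eq, Set.mem_iUnion, Finset.mem_range]
    constructor
    · rintro ⟨k, hk, hCk⟩
      have hex : ∃ m, C ≤ S m ω := ⟨k, hCk⟩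
      refine ⟨Nat.find hex, by have := Nat.find_min' hex hCk; omega, ?_⟩
      refine ⟨Nat.find_spec hex, ?_⟩
      simp only [Set.mem_iInter, Set.mem_setOf_eq]
      intro j hj
      have := Nat.find_min hex hj
      linarith [not_le.1 this]
    · rintro ⟨k, hk, hke⟩
      exact ⟨k, by omega, hke.1⟩
  -- disjointness
  have hdisj : (↑(Finset.range (n+1)) : Set ℕ).PairwiseDisjoint E := by
    intro a ha b hb hab
    wlog h : a < b generalizing a b
    · exact (this hb ha hab.symm (by omega)).symm
    refine Set.disjoint_left.2 fun ω hωa hωb => ?_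
    have h1 : C ≤ S a ω := hωa.1
    have h2 : S a ω < C := by
      have := hωb.2
      simp only [Set.mem_iInter, Set.mem_setOf_eq] at this
      exact this a h
    linarith
  -- independence and the key bound
  have hkey : ∀ k ≤ n, ℙ (E k) ≤ 2 * ℙ (E k ∩ F k) := by
    intro k hk
    have h_le : ∀ i : ℕ, MeasurableSpace.comap (Y i) Real.measurableSpace
        ≤ (inferInstance : MeasurableSpace Ω) := fun i => (hmY i).comap_le
    have hIndep : Indep (⨆ i ∈ {i : ℕ | i < k}, MeasurableSpace.comap (Y i) Real.measurableSpace)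
        (⨆ i ∈ {i : ℕ | k ≤ i}, MeasurableSpace.comap (Y i) Real.measurableSpace) ℙ := by
      refine indep_iSup_of_disjoint h_le hind.iIndep ?_
      rw [Set.disjoint_left]
      intro i hi hi'
      simp only [Set.mem_setOf_eq] at hi hi'
      omega
    have hYmS : ∀ i < k, Measurable[⨆ i ∈ {i : ℕ | i < k},
        MeasurableSpace.comap (Y i) Real.measurableSpace] (Y i) := by
      intro i hi
      exact (measurable_iff_comap_le.2 le_rfl).mono
        (le_iSup₂ (f := fun (i : ℕ) (_ : i ∈ {i : ℕ | i < k}) =>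
          MeasurableSpace.comap (Y i) Real.measurableSpace) i hi) le_rfl
    have hYmT : ∀ i, k ≤ i → Measurable[⨆ i ∈ {i : ℕ | k ≤ i},
        MeasurableSpace.comap (Y i) Real.measurableSpace] (Y i) := by
      intro i hi
      exact (measurable_iff_comap_le.2 le_rfl).mono
        (le_iSup₂ (f := fun (i : ℕ) (_ : i ∈ {i : ℕ | k ≤ i}) =>
          MeasurableSpace.comap (Y i) Real.measurableSpace) i hi) le_rfl
    have hSmS : ∀ j ≤ k, Measurable[⨆ i ∈ {i : ℕ | i < k},
        MeasurableSpace.comap (Y i) Real.measurableSpace] (S j) := by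
      intro j hj
      apply Finset.measurable_sum
      intro i hi
      simp only [Finset.mem_range] at hi
      exact hYmS i (by omega)
    have hEk : MeasurableSet[⨆ i ∈ {i : ℕ | i < k},
        MeasurableSpace.comap (Y i) Real.measurableSpace] (E k) := by
      refine MeasurableSet.inter ?_ ?_
      · exact measurableSet_le measurable_const (hSmS k le_rfl)
      · exact MeasurableSet.iInter fun j => MeasurableSet.iInter fun hj =>
          measurableSet_lt (hSmS j (by omega)) measurable_const
    have hFk : MeasurableSet[⨆ i ∈ {i : ℕ | k ≤ i},
        MeasurableSpace.comap (Y i) Real.measurableSpace] (F k) := by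
      apply measurableSet_le measurable_const
      apply Finset.measurable_sum
      intro i hi
      simp only [Finset.mem_Ico] at hi
      exact hYmT i hi.1
    have hprod : ℙ (E k ∩ F k) = ℙ (E k) * ℙ (F k) :=
      (hIndep.indepSet_of_measurableSet hEk hFk).measure_inter_eq_mul
    have hhalf := aux_half Y hmY hind hsym k n
    have h21 : (1/2 : ℝ≥0∞) * 2 = 1 := by
      rw [one_div, ENNReal.inv_mul_cancel] <;> norm_num
    calc ℙ (E k) = ℙ (E k) * ((1/2) * 2) := by rw [h21, mul_one]
      _ = 2 * (ℙ (E k) * (1/2)) := by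
          rw [← mul_assoc]; exact mul_comm _ _
      _ ≤ 2 * (ℙ (E k) * ℙ (F k)) := by gcongr
      _ = 2 * ℙ (E k ∩ F k) := by rw [hprod]
  -- E k ∩ F k ⊆ target
  have hsub : ∀ k ≤ n, E k ∩ F k ⊆ {ω | C ≤ S n ω} := by
    intro k hk ω hω
    have h1 : C ≤ S k ω := hω.1.1
    have h2 : 0 ≤ ∑ i ∈ Finset.Ico k n, Y i ω := hω.2
    have h3 : S k ω + ∑ i ∈ Finset.Ico k n, Y i ω = S n ω :=
      Finset.sum_range_add_sum_Ico _ hk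
    simp only [Set.mem_setOf_eq]
    linarith
  -- combine
  calc ℙ {ω | ∃ k ≤ n, C ≤ S k ω} = ℙ (⋃ k ∈ Finset.range (n+1), E k) := by rw [hunion]
    _ = ∑ k ∈ Finset.range (n+1), ℙ (E k) :=
        measure_biUnion_finset hdisj (fun k _ => hEmeas k)
    _ ≤ ∑ k ∈ Finset.range (n+1), 2 * ℙ (E k ∩ F k) := by
        apply Finset.sum_le_sum
        intro k hk
        exact hkey k (by simp only [Finset.mem_range] at hk; omega)
    _ = 2 * ∑ k ∈ Finset.range (n+1), ℙ (E k ∩ F k) := by rw [Finset.mul_sum]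
    _ = 2 * ℙ (⋃ k ∈ Finset.range (n+1), (E k ∩ F k)) := by
        rw [measure_biUnion_finset]
        · exact fun a ha b hb hab => Disjoint.mono Set.inter_subset_left
            Set.inter_subset_left (hdisj ha hb hab)
        · exact fun k _ => (hEmeas k).inter (hFmeas k)
    _ ≤ 2 * ℙ {ω | C ≤ S n ω} := by
        gcongr
        refine Set.iUnion₂_subset fun k hk => ?_
        exact hsub k (by simp only [Finset.mem_range] at hk; omega)

lemma aux_unbounded (Y : ℕ → Ω → ℝ) (hmY : ∀ i, Measurable (Y i))
    (hind : iIndepFun Y ℙ)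
    (a : ℝ) (ha : 0 < a) (p : ℝ≥0∞) (hp : p ≠ 0)
    (hprob : ∀ i, ℙ {ω | a ≤ Y i ω} = p) (M : ℝ) :
    ℙ {ω | ∀ n : ℕ, |∑ i ∈ Finset.range n, Y i ω| ≤ M} = 0 := by
  classical
  set k : ℕ := ⌈2*M/a⌉₊ + 1 with hk
  have hk0 : 0 < k := Nat.succ_pos _
  have hka : 2*M < (k:ℝ) * a := by
    have h1 : 2*M/a < (k:ℝ) := by
      have := Nat.le_ceil (2*M/a)
      push_cast [hk]
      linarith
    calc 2*M = (2*M/a) * a := by field_simp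
      _ < (k:ℝ) * a := by gcongr
  set bl : ℕ → Finset ℕ := fun m => (Finset.range k).image (fun j => m*k + j) with hbl
  set A : ℕ → Set Ω := fun m => ⋂ i ∈ bl m, {ω | a ≤ Y i ω} with hA
  have hsetmeas : ∀ i : ℕ, MeasurableSet[MeasurableSpace.comap (Y i) Real.measurableSpace]
      {ω | a ≤ Y i ω} := fun i => ⟨Set.Ici a, measurableSet_Ici, rfl⟩
  have hAmeas : ∀ m, MeasurableSet (A m) := by
    intro m
    exact Finset.measurableSet_biInter _ (fun i _ => measurableSet_le measurable_const (hmY i))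
  have hbl_card : ∀ m, (bl m).card = k := by
    intro m
    rw [hbl, Finset.card_image_of_injective _ (fun x y h => by omega), Finset.card_range]
  have hPA : ∀ m, ℙ (A m) = p ^ k := by
    intro m
    rw [hA, hind.meas_biInter (fun i _ => hsetmeas i)]
    rw [Finset.prod_congr rfl (fun i _ => hprob i), Finset.prod_const, hbl_card]
  have hbl_disj : ∀ x y : ℕ, x ≠ y → Disjoint (bl x) (bl y) := by
    intro x y hxy
    wlog h : x < y generalizing x y
    · exact (this y x hxy.symm (by omega)).symm
    simp only [hbl, Finset.disjoint_left, Finset.mem_image, Finset.mem_range]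
    rintro i ⟨j, hj, rfl⟩ ⟨j', hj', he⟩
    have h1 : (x+1)*k ≤ y*k := Nat.mul_le_mul_right k h
    have h2 : (x+1)*k = x*k + k := by rw [Nat.succ_mul]
    omega
  have hiiA : iIndepSet A ℙ := by
    rw [iIndepSet_iff_meas_biInter hAmeas]
    intro s
    have h1 : (⋂ m ∈ s, A m) = ⋂ i ∈ s.biUnion bl, {ω | a ≤ Y i ω} := by
      rw [Finset.set_biInter_biUnion]
    rw [h1, hind.meas_biInter (fun i _ => hsetmeas i), Finset.prod_biUnion]
    · exact Finset.prod_congr rfl (fun m hm => by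
        rw [Finset.prod_congr rfl (fun i _ => hprob i), Finset.prod_const, hbl_card, hPA])
    · intro x hx y hy hxy
      exact hbl_disj x y hxy
  have htsum : (∑' m : ℕ, ℙ (A m)) = ∞ := by
    simp only [hPA]
    exact ENNReal.tsum_const_eq_top_of_ne_zero (pow_ne_zero _ hp)
  have hBC : ℙ (limsup A atTop) = 1 := measure_limsup_eq_one hAmeas hiiA htsum
  -- bounded orbit event is disjoint from every A m
  have hdisjAB : ∀ m, {ω | ∀ n : ℕ, |∑ i ∈ Finset.range n, Y i ω| ≤ M} ∩ A m = ∅ := by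
    intro m
    ext ω
    simp only [Set.mem_inter_iff, Set.mem_setOf_eq, Set.mem_empty_iff_false, iff_false,
      not_and]
    intro hbdd hm
    have hge : ∀ j < k, a ≤ Y (m*k + j) ω := by
      intro j hj
      have := Set.mem_iInter₂.1 hm (m*k + j) (by
        simp only [hbl, Finset.mem_image, Finset.mem_range]
        exact ⟨j, hj, rfl⟩)
      exact this
    have hsum : (k:ℝ) * a ≤ ∑ j ∈ Finset.range k, Y (m*k + j) ω := by
      calc (k:ℝ) * a = ∑ _j ∈ Finset.range k, a := by
            rw [Finset.sum_const, Finset.card_range, nsmul_eq_mul]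
        _ ≤ _ := Finset.sum_le_sum (fun j hj => hge j (Finset.mem_range.1 hj))
    have hdiff : ∑ j ∈ Finset.range k, Y (m*k + j) ω
        = (∑ i ∈ Finset.range (m*k + k), Y i ω) - ∑ i ∈ Finset.range (m*k), Y i ω := by
      have h2 : ∑ i ∈ Finset.Ico (m*k) (m*k + k), Y i ω
          = ∑ j ∈ Finset.range k, Y (m*k + j) ω := by
        rw [Finset.sum_Ico_eq_sum_range]
        simp
      have h3 := Finset.sum_range_add_sum_Ico (fun i => Y i ω)
        (show m*k ≤ m*k + k by omega)
      rw [← h3, h2]; ring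
    have h4 := hbdd (m*k + k)
    have h5 := hbdd (m*k)
    have h6 : ∑ j ∈ Finset.range k, Y (m*k + j) ω ≤ 2*M := by
      rw [hdiff]
      have := abs_le.1 h4
      have := abs_le.1 h5
      linarith
    linarith
  have hsub : {ω | ∀ n : ℕ, |∑ i ∈ Finset.range n, Y i ω| ≤ M} ⊆ (limsup A atTop)ᶜ := by
    intro ω hω
    intro hcon
    have hlim : limsup A atTop ⊆ ⋃ m, A m := by
      have := Filter.limsup_le_iSup (u := A) (f := atTop)
      simpa using this
    obtain ⟨m, hm⟩ := Set.mem_iUnion.1 (hlim hcon)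
    have := hdisjAB m
    rw [Set.eq_empty_iff_forall_notMem] at this
    exact this ω ⟨hω, hm⟩
  have hclose : ℙ (limsup A atTop)ᶜ = 0 := by
    rw [measure_compl (MeasurableSet.measurableSet_limsup hAmeas) (measure_ne_top _ _), hBC]
    simp
  refine le_antisymm ?_ (zero_le)
  rw [← hclose]
  exact measure_mono hsub

lemma aux_Uplus (Y : ℕ → Ω → ℝ) (hmY : ∀ i, Measurable (Y i))
    (hind : iIndepFun Y ℙ)
    (hsym : ∀ i, Measure.map (Y i) ℙ = Measure.map (fun ω => -(Y i ω)) ℙ)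
    (hunb : ∀ M : ℝ, ℙ {ω | ∀ n : ℕ, |∑ i ∈ Finset.range n, Y i ω| ≤ M} = 0) :
    ℙ (⋂ (M : ℕ), ⋃ (n : ℕ), {ω | (M:ℝ) < ∑ i ∈ Finset.range n, Y i ω}) = 1 := by
  classical
  set S : ℕ → Ω → ℝ := fun n ω => ∑ i ∈ Finset.range n, Y i ω with hS
  have hmS : ∀ n, Measurable (S n) := fun n => Finset.measurable_sum _ (fun i _ => hmY i)
  set Up : Set Ω := ⋂ (M : ℕ), ⋃ (n : ℕ), {ω | (M:ℝ) < S n ω} with hUp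
  set Um : Set Ω := ⋂ (M : ℕ), ⋃ (n : ℕ), {ω | S n ω < -(M:ℝ)} with hUm
  have hUpmeas : MeasurableSet Up :=
    MeasurableSet.iInter fun M => MeasurableSet.iUnion fun n =>
      measurableSet_lt measurable_const (hmS n)
  have hUmmeas : MeasurableSet Um :=
    MeasurableSet.iInter fun M => MeasurableSet.iUnion fun n =>
      measurableSet_lt (hmS n) measurable_const
  -- Step 1 : zero-one law
  have h01 : ℙ Up = 0 ∨ ℙ Up = 1 := by
    refine measure_zero_or_one_of_measurableSet_limsup_atTop
      (s := fun i => MeasurableSpace.comap (Y i) Real.measurableSpace)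
      (fun i => (hmY i).comap_le) hind.iIndep ?_
    rw [limsup_eq_iInf_iSup_of_nat]
    rw [MeasurableSpace.measurableSet_iInf]
    intro n₀
    set mT := ⨆ i, ⨆ (_ : i ≥ n₀), MeasurableSpace.comap (Y i) Real.measurableSpace with hmT
    have hYmT : ∀ i, n₀ ≤ i → Measurable[mT] (Y i) := by
      intro i hi
      exact (measurable_iff_comap_le.2 le_rfl).mono
        (le_iSup₂ (f := fun (i : ℕ) (_ : i ≥ n₀) =>
          MeasurableSpace.comap (Y i) Real.measurableSpace) i hi) le_rfl
    have hTmeas : ∀ j : ℕ, Measurable[mT] (fun ω => ∑ i ∈ Finset.Ico n₀ (n₀+j), Y i ω) := by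
      intro j
      apply Finset.measurable_sum
      intro i hi
      exact hYmT i (Finset.mem_Ico.1 hi).1
    have hrepr : Up = ⋂ (M : ℕ), ⋃ (j : ℕ),
        {ω | (M:ℝ) < ∑ i ∈ Finset.Ico n₀ (n₀+j), Y i ω} := by
      ext ω
      simp only [hUp, Set.mem_iInter, Set.mem_iUnion, Set.mem_setOf_eq]
      have hID : ∀ j : ℕ, S n₀ ω + ∑ i ∈ Finset.Ico n₀ (n₀+j), Y i ω = S (n₀+j) ω :=
        fun j => Finset.sum_range_add_sum_Ico _ (by omega)
      constructor
      · intro hω M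
        set c : ℝ := ∑ r ∈ Finset.range (n₀+1), |S r ω| with hc
        have hcb : ∀ r, r ≤ n₀ → S r ω ≤ c := by
          intro r hr
          refine le_trans (le_abs_self _) ?_
          exact Finset.single_le_sum (f := fun r => |S r ω|) (fun i _ => abs_nonneg _)
            (Finset.mem_range.2 (by omega))
        set x : ℝ := max ((M:ℝ) + S n₀ ω) c with hx
        obtain ⟨n, hn⟩ := hω ⌈x⌉₊
        have hxn : x ≤ (⌈x⌉₊ : ℝ) := Nat.le_ceil x
        have hn0 : n₀ ≤ n := by
          by_contra hcon
          have h1 : S n ω ≤ c := hcb n (by omega)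
          have h2 : c ≤ x := le_max_right _ _
          linarith
        refine ⟨n - n₀, ?_⟩
        have hid := hID (n - n₀)
        rw [show n₀ + (n - n₀) = n by omega] at hid ⊢
        have h3 : (M:ℝ) + S n₀ ω ≤ x := le_max_left _ _
        linarith
      · intro hω M
        obtain ⟨j, hj⟩ := hω ⌈(M:ℝ) - S n₀ ω⌉₊
        refine ⟨n₀ + j, ?_⟩
        have := Nat.le_ceil ((M:ℝ) - S n₀ ω)
        have hid := hID j
        linarith
    rw [hrepr]
    exact MeasurableSet.iInter fun M => MeasurableSet.iUnion fun j =>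
      measurableSet_lt measurable_const (hTmeas j)
  -- Step 2 : ℙ Up = ℙ Um
  have hGfin : ∀ (M : ℝ) (N : ℕ),
      ℙ (⋂ (n : ℕ) (_ : n ≤ N), {ω | S n ω ≤ M})
        = ℙ (⋂ (n : ℕ) (_ : n ≤ N), {ω | -M ≤ S n ω}) := by
    intro M N
    set B : Set (Fin N → ℝ) :=
      ⋂ (n : ℕ) (_ : n ≤ N), {v | (∑ i : Fin N, if (i:ℕ) < n then v i else 0) ≤ M} with hB
    have hBmeas : MeasurableSet B := by
      refine MeasurableSet.iInter fun n => MeasurableSet.iInter fun _ => ?_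
      refine measurableSet_le (Finset.measurable_sum _ (fun i _ => ?_)) measurable_const
      split
      · exact measurable_pi_apply i
      · exact measurable_const
    have hcomp : ∀ (ω : Ω) (n : ℕ), n ≤ N →
        (∑ i : Fin N, if (i:ℕ) < n then Y (0 + (i:ℕ)) ω else 0) = S n ω := by
      intro ω n hn
      rw [Fin.sum_univ_eq_sum_range (fun i => if i < n then Y (0 + i) ω else 0) N]
      rw [← Finset.sum_filter]
      have : (Finset.range N).filter (· < n) = Finset.range n := by
        ext i
        simp only [Finset.mem_filter, Finset.mem_range]
        omega
      rw [this]
      simp [hS]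
    have h1 : (⋂ (n : ℕ) (_ : n ≤ N), {ω | S n ω ≤ M})
        = {ω | (fun i : Fin N => Y (0 + (i:ℕ)) ω) ∈ B} := by
      ext ω
      simp only [Set.mem_iInter, Set.mem_setOf_eq, hB]
      constructor
      · intro h n hn
        rw [hcomp ω n hn]; exact h n hn
      · intro h n hn
        rw [← hcomp ω n hn]; exact h n hn
    have h2 : {ω | (fun i : Fin N => -(Y (0 + (i:ℕ)) ω)) ∈ B}
        = ⋂ (n : ℕ) (_ : n ≤ N), {ω | -M ≤ S n ω} := by
      ext ω
      simp only [Set.mem_iInter, Set.mem_setOf_eq, hB]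
      have hneg : ∀ n : ℕ, (∑ i : Fin N, if (i:ℕ) < n then -(Y (0 + (i:ℕ)) ω) else 0)
          = -(∑ i : Fin N, if (i:ℕ) < n then Y (0 + (i:ℕ)) ω else 0) := by
        intro n
        rw [← Finset.sum_neg_distrib]
        congr 1
        funext i
        split <;> simp
      constructor
      · intro h n hn
        have := h n hn
        rw [hneg n, hcomp ω n hn] at this
        linarith
      · intro h n hn
        rw [hneg n, hcomp ω n hn]
        have := h n hn
        linarith
    rw [h1, ← h2]
    exact aux_symm_event Y hmY hind hsym 0 N hBmeas
  have hGlim : ∀ M : ℕ, ℙ (⋂ (n : ℕ), {ω | S n ω ≤ (M:ℝ)})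
      = ℙ (⋂ (n : ℕ), {ω | -(M:ℝ) ≤ S n ω}) := by
    intro M
    have hp : Tendsto (fun N => ℙ (⋂ (n : ℕ) (_ : n ≤ N), {ω | S n ω ≤ (M:ℝ)})) atTop
        (nhds (ℙ (⋂ N, ⋂ (n : ℕ) (_ : n ≤ N), {ω | S n ω ≤ (M:ℝ)}))) := by
      apply tendsto_measure_iInter_atTop
      · exact fun N => (MeasurableSet.iInter fun n => MeasurableSet.iInter fun _ =>
          measurableSet_le (hmS n) measurable_const).nullMeasurableSet
      · intro N N' hNN'
        exact Set.iInter_mono fun n => Set.iInter_mono' fun h => ⟨le_trans h hNN', le_rfl⟩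
      · exact ⟨0, measure_ne_top _ _⟩
    have hm : Tendsto (fun N => ℙ (⋂ (n : ℕ) (_ : n ≤ N), {ω | -(M:ℝ) ≤ S n ω})) atTop
        (nhds (ℙ (⋂ N, ⋂ (n : ℕ) (_ : n ≤ N), {ω | -(M:ℝ) ≤ S n ω}))) := by
      apply tendsto_measure_iInter_atTop
      · exact fun N => (MeasurableSet.iInter fun n => MeasurableSet.iInter fun _ =>
          measurableSet_le measurable_const (hmS n)).nullMeasurableSet
      · intro N N' hNN'
        exact Set.iInter_mono fun n => Set.iInter_mono' fun h => ⟨le_trans h hNN', le_rfl⟩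
      · exact ⟨0, measure_ne_top _ _⟩
    have he : (fun N => ℙ (⋂ (n : ℕ) (_ : n ≤ N), {ω | S n ω ≤ (M:ℝ)}))
        = (fun N => ℙ (⋂ (n : ℕ) (_ : n ≤ N), {ω | -(M:ℝ) ≤ S n ω})) :=
      funext fun N => hGfin (M:ℝ) N
    rw [he] at hp
    have h3 : (⋂ N, ⋂ (n : ℕ) (_ : n ≤ N), {ω | S n ω ≤ (M:ℝ)})
        = ⋂ (n : ℕ), {ω | S n ω ≤ (M:ℝ)} := by
      ext ω; simp only [Set.mem_iInter, Set.mem_setOf_eq]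
      exact ⟨fun h n => h n n le_rfl, fun h N n _ => h n⟩
    have h4 : (⋂ N, ⋂ (n : ℕ) (_ : n ≤ N), {ω | -(M:ℝ) ≤ S n ω})
        = ⋂ (n : ℕ), {ω | -(M:ℝ) ≤ S n ω} := by
      ext ω; simp only [Set.mem_iInter, Set.mem_setOf_eq]
      exact ⟨fun h n => h n n le_rfl, fun h N n _ => h n⟩
    rw [h3] at hp
    rw [h4] at hm
    exact tendsto_nhds_unique hp hm
  have hUc : ℙ Upᶜ = ℙ Umᶜ := by
    have h1 : Upᶜ = ⋃ (M : ℕ), ⋂ (n : ℕ), {ω | S n ω ≤ (M:ℝ)} := by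
      rw [hUp]
      ext ω
      simp only [Set.mem_compl_iff, Set.mem_iInter, Set.mem_iUnion, Set.mem_setOf_eq,
        not_forall, not_exists, not_lt]
    have h2 : Umᶜ = ⋃ (M : ℕ), ⋂ (n : ℕ), {ω | -(M:ℝ) ≤ S n ω} := by
      rw [hUm]
      ext ω
      simp only [Set.mem_compl_iff, Set.mem_iInter, Set.mem_iUnion, Set.mem_setOf_eq,
        not_forall, not_exists, not_lt]
    have hup : Tendsto (fun M : ℕ => ℙ (⋂ (n : ℕ), {ω | S n ω ≤ (M:ℝ)})) atTop
        (nhds (ℙ (⋃ (M : ℕ), ⋂ (n : ℕ), {ω | S n ω ≤ (M:ℝ)}))) := by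
      apply tendsto_measure_iUnion_atTop
      intro M M' hMM' ω hω
      simp only [Set.mem_iInter, Set.mem_setOf_eq] at hω ⊢
      intro n
      have : (M:ℝ) ≤ (M':ℝ) := by exact_mod_cast hMM'
      linarith [hω n]
    have hum : Tendsto (fun M : ℕ => ℙ (⋂ (n : ℕ), {ω | -(M:ℝ) ≤ S n ω})) atTop
        (nhds (ℙ (⋃ (M : ℕ), ⋂ (n : ℕ), {ω | -(M:ℝ) ≤ S n ω}))) := by
      apply tendsto_measure_iUnion_atTop
      intro M M' hMM' ω hω
      simp only [Set.mem_iInter, Set.mem_setOf_eq] at hω ⊢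
      intro n
      have : (M:ℝ) ≤ (M':ℝ) := by exact_mod_cast hMM'
      linarith [hω n]
    have he : (fun M : ℕ => ℙ (⋂ (n : ℕ), {ω | S n ω ≤ (M:ℝ)}))
        = (fun M : ℕ => ℙ (⋂ (n : ℕ), {ω | -(M:ℝ) ≤ S n ω})) := funext fun M => hGlim M
    rw [he] at hup
    rw [h1, h2]
    exact tendsto_nhds_unique hup hum
  have hUpUm : ℙ Up = ℙ Um := by
    have h1 : ℙ Upᶜ = 1 - ℙ Up := by
      rw [measure_compl hUpmeas (measure_ne_top _ _), measure_univ]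
    have h2 : ℙ Umᶜ = 1 - ℙ Um := by
      rw [measure_compl hUmmeas (measure_ne_top _ _), measure_univ]
    have h3 : (1:ℝ≥0∞) - (1 - ℙ Up) = ℙ Up :=
      ENNReal.sub_sub_cancel (by norm_num) prob_le_one
    have h4 : (1:ℝ≥0∞) - (1 - ℙ Um) = ℙ Um :=
      ENNReal.sub_sub_cancel (by norm_num) prob_le_one
    rw [← h3, ← h4, ← h1, ← h2, hUc]
  -- Step 3 : ℙ (Up ∪ Um) = 1
  have hW : ℙ (⋃ (M : ℕ), {ω | ∀ n : ℕ, |S n ω| ≤ (M:ℝ)}) = 0 :=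
    measure_iUnion_null (fun M => hunb (M:ℝ))
  have hcover : (⋃ (M : ℕ), {ω | ∀ n : ℕ, |S n ω| ≤ (M:ℝ)})ᶜ ⊆ Up ∪ Um := by
    intro ω hω
    simp only [Set.mem_compl_iff, Set.mem_iUnion, Set.mem_setOf_eq, not_exists, not_forall] at hω
    by_cases hp : ω ∈ Up
    · exact Or.inl hp
    · right
      simp only [hUp, Set.mem_iInter, Set.mem_iUnion, Set.mem_setOf_eq, not_forall,
        not_exists, not_lt] at hp
      obtain ⟨M₀, hM₀⟩ := hp
      simp only [hUm, Set.mem_iInter, Set.mem_iUnion, Set.mem_setOf_eq]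
      intro M
      obtain ⟨n, hn⟩ := hω (max M M₀)
      rw [not_le] at hn
      have h1 : S n ω ≤ (M₀:ℝ) := hM₀ n
      have h2 : ((max M M₀ : ℕ):ℝ) = max (M:ℝ) (M₀:ℝ) := by
        push_cast
        rfl
      rw [h2] at hn
      refine ⟨n, ?_⟩
      rcases abs_cases (S n ω) with ⟨he, _⟩ | ⟨he, _⟩
      · rw [he] at hn
        have := le_max_right (M:ℝ) (M₀:ℝ)
        linarith
      · rw [he] at hn
        have := le_max_left (M:ℝ) (M₀:ℝ)
        linarith
  -- conclude
  have hWmeas : MeasurableSet (⋃ (M : ℕ), {ω | ∀ n : ℕ, |S n ω| ≤ (M:ℝ)}) := by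
    refine MeasurableSet.iUnion fun M => ?_
    have : {ω | ∀ n : ℕ, |S n ω| ≤ (M:ℝ)} = ⋂ (n : ℕ), {ω | |S n ω| ≤ (M:ℝ)} := by
      ext ω; simp [Set.mem_iInter]
    rw [this]
    exact MeasurableSet.iInter fun n => measurableSet_le (hmS n).abs measurable_const
  have hone : (1:ℝ≥0∞) ≤ ℙ Up + ℙ Um := by
    have hWc : ℙ ((⋃ (M : ℕ), {ω | ∀ n : ℕ, |S n ω| ≤ (M:ℝ)})ᶜ) = 1 := by
      rw [measure_compl hWmeas (measure_ne_top _ _), hW, measure_univ]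
      simp
    calc (1:ℝ≥0∞) = ℙ ((⋃ (M : ℕ), {ω | ∀ n : ℕ, |S n ω| ≤ (M:ℝ)})ᶜ) := hWc.symm
      _ ≤ ℙ (Up ∪ Um) := measure_mono hcover
      _ ≤ ℙ Up + ℙ Um := measure_union_le _ _
  rcases h01 with h0 | h1
  · exfalso
    rw [h0, ← hUpUm, h0] at hone
    simp at hone
  · exact h1

lemma aux_Y_indep (X : ℕ → Ω → ℝ) (hmX : ∀ n, Measurable (X n))
    (hindep : iIndepFun X ℙ) :
    iIndepFun
      (fun j ω => X (2*j) ω - X (2*j+1) ω) ℙ := by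
  have h := (aux_pair_indep X hmX hindep).comp
    (g := fun _ => (fun p : ℝ × ℝ => p.1 - p.2))
    (fun _ => measurable_fst.sub measurable_snd)
  exact h

lemma aux_Y_map (X : ℕ → Ω → ℝ) (hmX : ∀ n, Measurable (X n))
    (hindep : iIndepFun X ℙ)
    (hident : ∀ n, Measure.map (X n) (ℙ : Measure Ω) = Measure.map (X 0) ℙ) (j : ℕ) :
    Measure.map (fun ω => X (2*j) ω - X (2*j+1) ω) ℙ
      = Measure.map (fun p : ℝ × ℝ => p.1 - p.2)
          ((Measure.map (X 0) ℙ).prod (Measure.map (X 0) ℙ)) := by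
  have hpair : Measure.map (fun ω => (X (2*j) ω, X (2*j+1) ω)) ℙ
      = (Measure.map (X (2*j)) ℙ).prod (Measure.map (X (2*j+1)) ℙ) :=
    (indepFun_iff_map_prod_eq_prod_map_map (hmX _).aemeasurable (hmX _).aemeasurable).1
      (hindep.indepFun (show 2*j ≠ 2*j+1 by omega))
  have hcomp : (fun ω => X (2*j) ω - X (2*j+1) ω)
      = (fun p : ℝ × ℝ => p.1 - p.2) ∘ (fun ω => (X (2*j) ω, X (2*j+1) ω)) := rfl
  rw [hcomp, ← Measure.map_map (g := (fun p : ℝ × ℝ => p.1 - p.2)) (measurable_fst.sub measurable_snd)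
    ((hmX _).prodMk (hmX _)), hpair, hident (2*j), hident (2*j+1)]

lemma aux_Y_symm (X : ℕ → Ω → ℝ) (hmX : ∀ n, Measurable (X n))
    (hindep : iIndepFun X ℙ)
    (hident : ∀ n, Measure.map (X n) (ℙ : Measure Ω) = Measure.map (X 0) ℙ) (j : ℕ) :
    Measure.map (fun ω => X (2*j) ω - X (2*j+1) ω) ℙ
      = Measure.map (fun ω => -(X (2*j) ω - X (2*j+1) ω)) ℙ := by
  haveI : IsProbabilityMeasure (Measure.map (X 0) ℙ) :=
    Measure.isProbabilityMeasure_map (hmX 0).aemeasurable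
  have hpair : Measure.map (fun ω => (X (2*j) ω, X (2*j+1) ω)) ℙ
      = (Measure.map (X 0) ℙ).prod (Measure.map (X 0) ℙ) := by
    rw [(indepFun_iff_map_prod_eq_prod_map_map (hmX _).aemeasurable (hmX _).aemeasurable).1
      (hindep.indepFun (show 2*j ≠ 2*j+1 by omega)), hident (2*j), hident (2*j+1)]
  have hcomp : (fun ω => -(X (2*j) ω - X (2*j+1) ω))
      = ((fun p : ℝ × ℝ => p.1 - p.2) ∘ Prod.swap) ∘ (fun ω => (X (2*j) ω, X (2*j+1) ω)) := by
    funext ω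
    simp [Prod.swap]
  rw [aux_Y_map X hmX hindep hident j, hcomp,
    ← Measure.map_map (g := (fun p : ℝ × ℝ => p.1 - p.2) ∘ Prod.swap) ((measurable_fst.sub measurable_snd).comp measurable_swap)
      ((hmX _).prodMk (hmX _)), hpair,
    ← Measure.map_map (g := (fun p : ℝ × ℝ => p.1 - p.2)) (measurable_fst.sub measurable_snd) measurable_swap,
    Measure.prod_swap]

lemma aux_Y_nondeg (X : ℕ → Ω → ℝ) (hmX : ∀ n, Measurable (X n))
    (hindep : iIndepFun X ℙ)
    (hident : ∀ n, Measure.map (X n) (ℙ : Measure Ω) = Measure.map (X 0) ℙ)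
    (hnondirac : ∀ c : ℝ, ¬ (X 0 =ᵐ[(ℙ : Measure Ω)] fun _ => c)) :
    ∃ a : ℝ, 0 < a ∧ ℙ {ω | a ≤ X (2*0) ω - X (2*0+1) ω} ≠ 0 := by
  classical
  set Y0 : Ω → ℝ := fun ω => X (2*0) ω - X (2*0+1) ω with hY0
  have hmY0 : Measurable Y0 := (hmX _).sub (hmX _)
  haveI : IsProbabilityMeasure (Measure.map (X 0) ℙ) :=
    Measure.isProbabilityMeasure_map (hmX 0).aemeasurable
  set μ : Measure ℝ := Measure.map (X 0) ℙ with hμ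
  -- ℙ (Y0 ≠ 0) ≠ 0
  have hne : ℙ {ω | Y0 ω ≠ 0} ≠ 0 := by
    intro hzero
    have hmap := aux_Y_map X hmX hindep hident 0
    have hsetm : MeasurableSet ({0}ᶜ : Set ℝ) := (measurableSet_singleton 0).compl
    have h1 : Measure.map Y0 ℙ {0}ᶜ = 0 := by
      rw [Measure.map_apply hmY0 hsetm]
      have : Y0 ⁻¹' {0}ᶜ = {ω | Y0 ω ≠ 0} := by
        ext ω; simp
      rw [this, hzero]
    rw [hmap] at h1
    rw [Measure.map_apply (f := (fun p : ℝ × ℝ => p.1 - p.2)) (measurable_fst.sub measurable_snd) hsetm] at h1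
    have hsub : ((fun p : ℝ × ℝ => p.1 - p.2) ⁻¹' {0}ᶜ) = {p : ℝ × ℝ | p.1 ≠ p.2} := by
      ext p; simp [sub_eq_zero]
    rw [hsub] at h1
    have hmeasur : MeasurableSet {p : ℝ × ℝ | p.1 ≠ p.2} := by
      have : {p : ℝ × ℝ | p.1 ≠ p.2} = (fun p : ℝ × ℝ => p.1 - p.2) ⁻¹' {0}ᶜ := hsub.symm
      rw [this]
      exact (measurable_fst.sub measurable_snd) hsetm
    rw [Measure.prod_apply hmeasur] at h1
    have hae : (fun x => μ (Prod.mk x ⁻¹' {p : ℝ × ℝ | p.1 ≠ p.2})) =ᵐ[μ] 0 :=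
      (lintegral_eq_zero_iff (measurable_measure_prodMk_left hmeasur)).1 h1
    obtain ⟨x₀, hx₀⟩ := hae.exists
    have : μ {x₀}ᶜ = 0 := by
      have hseteq : (Prod.mk x₀ ⁻¹' {p : ℝ × ℝ | p.1 ≠ p.2}) = {x₀}ᶜ := by
        ext y; simp [eq_comm]
      rw [← hseteq]
      simpa using hx₀
    apply hnondirac x₀
    have : ℙ (X 0 ⁻¹' {x₀}ᶜ) = 0 := by
      rw [← Measure.map_apply (hmX 0) (measurableSet_singleton x₀).compl]
      exact this
    rw [Filter.eventuallyEq_iff_exists_mem]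
    refine ⟨(X 0 ⁻¹' {x₀}ᶜ)ᶜ, ?_, ?_⟩
    · rw [mem_ae_iff]
      simpa using this
    · intro ω hω
      simp only [Set.mem_compl_iff, Set.mem_preimage, Set.mem_compl_iff,
        Set.mem_singleton_iff, not_not] at hω
      exact hω
  -- pick a with ℙ (|Y0| ≥ a) ≠ 0
  have hcup : {ω | Y0 ω ≠ 0} ⊆ ⋃ m : ℕ, {ω | 1/((m:ℝ)+1) ≤ |Y0 ω|} := by
    intro ω hω
    simp only [Set.mem_setOf_eq] at hω
    have habs : 0 < |Y0 ω| := abs_pos.2 hω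
    obtain ⟨m, hm⟩ := exists_nat_one_div_lt habs
    exact Set.mem_iUnion.2 ⟨m, le_of_lt hm⟩
  have hex : ∃ m : ℕ, ℙ {ω | 1/((m:ℝ)+1) ≤ |Y0 ω|} ≠ 0 := by
    by_contra hcon
    push_neg at hcon
    exact hne (le_antisymm (le_trans (measure_mono hcup)
      (le_of_eq (measure_iUnion_null hcon))) (zero_le))
  obtain ⟨m, hm⟩ := hex
  set a : ℝ := 1/((m:ℝ)+1) with haa
  have ha : 0 < a := by positivity
  refine ⟨a, ha, ?_⟩
  intro hcon
  -- symmetry : ℙ (Y0 ≤ -a) = ℙ (a ≤ Y0)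
  have hsymm := aux_Y_symm X hmX hindep hident 0
  have hneg : ℙ {ω | Y0 ω ≤ -a} = ℙ {ω | a ≤ Y0 ω} := by
    have h1 : ℙ {ω | Y0 ω ≤ -a} = Measure.map Y0 ℙ (Set.Iic (-a)) := by
      rw [Measure.map_apply hmY0 measurableSet_Iic]; rfl
    have h2 : Measure.map (fun ω => -(Y0 ω)) ℙ (Set.Iic (-a)) = ℙ {ω | a ≤ Y0 ω} := by
      rw [Measure.map_apply (f := fun ω => -(Y0 ω)) hmY0.neg measurableSet_Iic]
      congr 1
      ext ω
      simp only [Set.mem_preimage, Set.mem_Iic, Set.mem_setOf_eq]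
      constructor <;> intro <;> linarith
    rw [h1, hsymm, h2]
  have hsplit : {ω | a ≤ |Y0 ω|} ⊆ {ω | a ≤ Y0 ω} ∪ {ω | Y0 ω ≤ -a} := by
    intro ω hω
    simp only [Set.mem_setOf_eq, Set.mem_union] at hω ⊢
    rcases abs_cases (Y0 ω) with ⟨he, _⟩ | ⟨he, _⟩
    · left; linarith
    · right; linarith
  apply hm
  refine le_antisymm ?_ (zero_le)
  calc ℙ {ω | 1/((m:ℝ)+1) ≤ |Y0 ω|} ≤ ℙ ({ω | a ≤ Y0 ω} ∪ {ω | Y0 ω ≤ -a}) :=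
        measure_mono hsplit
    _ ≤ ℙ {ω | a ≤ Y0 ω} + ℙ {ω | Y0 ω ≤ -a} := measure_union_le _ _
    _ = 0 := by rw [hcon, hneg, hcon]; simp

end Aux

/-- If the `X_n` are i.i.d. with a non-degenerate (non-Dirac) common law and
`S_n = ∑_{i=1}^n (X_{2i−1} − X_{2i})`, then for every `C > 0` one has
`ℙ(S_n ≥ C) → 1/2` and `ℙ(S_n ≤ −C) → 1/2` as `n → ∞`. -/
theorem prob_symmetric_sum_half
    {Ω : Type} [MeasureSpace Ω] [IsProbabilityMeasure (ℙ : Measure Ω)]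
    (X : ℕ → Ω → ℝ) (hmX : ∀ n, Measurable (X n))
    (hindep : iIndepFun X ℙ)
    (hident : ∀ n, Measure.map (X n) (ℙ : Measure Ω) = Measure.map (X 0) ℙ)
    (hnondirac : ∀ c : ℝ, ¬ (X 0 =ᵐ[(ℙ : Measure Ω)] fun _ => c)) :
    ∀ C > (0 : ℝ),
      Tendsto (fun n => (ℙ : Measure Ω)
          {ω | C ≤ ∑ i ∈ Finset.range n, (X (2 * i) ω - X (2 * i + 1) ω)})
        atTop (nhds (1 / 2)) ∧
      Tendsto (fun n => (ℙ : Measure Ω)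
          {ω | ∑ i ∈ Finset.range n, (X (2 * i) ω - X (2 * i + 1) ω) ≤ -C})
        atTop (nhds (1 / 2)) := by
  intro C hC
  classical
  let Y : ℕ → Ω → ℝ := fun i ω => X (2*i) ω - X (2*i+1) ω
  have hmY : ∀ i, Measurable (Y i) := fun i => (hmX _).sub (hmX _)
  have hindY : iIndepFun Y ℙ := aux_Y_indep X hmX hindep
  have hsymY : ∀ i, Measure.map (Y i) ℙ = Measure.map (fun ω => -(Y i ω)) ℙ :=
    fun i => aux_Y_symm X hmX hindep hident i
  have hmapY : ∀ i, Measure.map (Y i) ℙ = Measure.map (Y 0) ℙ := by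
    intro i
    rw [show Measure.map (Y i) ℙ = Measure.map (fun ω => X (2*i) ω - X (2*i+1) ω) ℙ from rfl,
      aux_Y_map X hmX hindep hident i,
      show Measure.map (Y 0) ℙ = Measure.map (fun ω => X (2*0) ω - X (2*0+1) ω) ℙ from rfl,
      aux_Y_map X hmX hindep hident 0]
  obtain ⟨a, ha, hp0⟩ := aux_Y_nondeg X hmX hindep hident hnondirac
  have hprob : ∀ i, ℙ {ω | a ≤ Y i ω} = ℙ {ω | a ≤ Y 0 ω} := by
    intro i
    have h1 : ∀ j, ℙ {ω | a ≤ Y j ω} = Measure.map (Y j) ℙ (Set.Ici a) := by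
      intro j
      rw [Measure.map_apply (hmY j) measurableSet_Ici]
      rfl
    rw [h1 i, h1 0, hmapY i]
  have hp0' : ℙ {ω | a ≤ Y 0 ω} ≠ 0 := hp0
  have hunb : ∀ M : ℝ, ℙ {ω | ∀ n : ℕ, |∑ i ∈ Finset.range n, Y i ω| ≤ M} = 0 :=
    fun M => aux_unbounded Y hmY hindY a ha _ hp0' hprob M
  have hUplus := aux_Uplus Y hmY hindY hsymY hunb
  -- notation
  have hvec : ∀ (n : ℕ) (ω : Ω), (∑ i : Fin n, Y (0 + (i:ℕ)) ω)
      = ∑ i ∈ Finset.range n, Y i ω := by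
    intro n ω
    rw [Fin.sum_univ_eq_sum_range (fun i => Y (0 + i) ω) n]
    simp
  -- symmetry of each S n
  have hsymC : ∀ n : ℕ, ℙ {ω | ∑ i ∈ Finset.range n, Y i ω ≤ -C}
      = ℙ {ω | C ≤ ∑ i ∈ Finset.range n, Y i ω} := by
    intro n
    have hBmeas : MeasurableSet {v : Fin n → ℝ | C ≤ ∑ i, v i} :=
      measurableSet_le measurable_const
        (Finset.measurable_sum _ (fun i _ => measurable_pi_apply i))
    have h := aux_symm_event Y hmY hindY hsymY 0 n hBmeas
    have h1 : {ω | (fun i : Fin n => Y (0 + (i:ℕ)) ω) ∈ {v : Fin n → ℝ | C ≤ ∑ i, v i}}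
        = {ω | C ≤ ∑ i ∈ Finset.range n, Y i ω} := by
      ext ω
      simp only [Set.mem_setOf_eq, hvec n ω]
    have h2 : {ω | (fun i : Fin n => -(Y (0 + (i:ℕ)) ω)) ∈ {v : Fin n → ℝ | C ≤ ∑ i, v i}}
        = {ω | ∑ i ∈ Finset.range n, Y i ω ≤ -C} := by
      ext ω
      simp only [Set.mem_setOf_eq, Finset.sum_neg_distrib, hvec n ω]
      constructor <;> intro <;> linarith
    rw [h1, h2] at h
    exact h.symm
  have hmSamb : ∀ n, Measurable (fun ω => ∑ i ∈ Finset.range n, Y i ω) :=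
    fun n => Finset.measurable_sum _ (fun i _ => hmY i)
  -- upper bound : a_n ≤ 1/2
  have hup : ∀ n : ℕ, ℙ {ω | C ≤ ∑ i ∈ Finset.range n, Y i ω} ≤ 1/2 := by
    intro n
    have hdisj : Disjoint {ω | C ≤ ∑ i ∈ Finset.range n, Y i ω}
        {ω | ∑ i ∈ Finset.range n, Y i ω ≤ -C} := by
      rw [Set.disjoint_left]
      intro ω h1 h2
      simp only [Set.mem_setOf_eq] at h1 h2
      linarith
    have hsum : ℙ {ω | C ≤ ∑ i ∈ Finset.range n, Y i ω}
        + ℙ {ω | ∑ i ∈ Finset.range n, Y i ω ≤ -C} ≤ 1 := by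
      rw [← measure_union hdisj (measurableSet_le (hmSamb n) measurable_const)]
      exact prob_le_one
    rw [hsymC n] at hsum
    rw [ENNReal.le_div_iff_mul_le (Or.inl (by norm_num)) (Or.inl (by norm_num))]
    calc ℙ {ω | C ≤ ∑ i ∈ Finset.range n, Y i ω} * 2
        = ℙ {ω | C ≤ ∑ i ∈ Finset.range n, Y i ω}
          + ℙ {ω | C ≤ ∑ i ∈ Finset.range n, Y i ω} := by rw [mul_two]
      _ ≤ 1 := hsum
  -- lower bound via Lévy
  have hlow : ∀ n : ℕ, ℙ {ω | ∃ k ≤ n, C ≤ ∑ i ∈ Finset.range k, Y i ω} / 2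
      ≤ ℙ {ω | C ≤ ∑ i ∈ Finset.range n, Y i ω} := by
    intro n
    rw [ENNReal.div_le_iff_le_mul (Or.inl (by norm_num)) (Or.inl (by norm_num))]
    rw [mul_comm]
    exact aux_levy Y hmY hindY hsymY C n
  -- the union has measure 1
  have humono : Monotone (fun n => {ω | ∃ k ≤ n, C ≤ ∑ i ∈ Finset.range k, Y i ω}) := by
    intro n n' hnn' ω hω
    obtain ⟨k, hk, hCk⟩ := hω
    exact ⟨k, le_trans hk hnn', hCk⟩
  have hulim : Tendsto (fun n => ℙ {ω | ∃ k ≤ n, C ≤ ∑ i ∈ Finset.range k, Y i ω}) atTop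
      (nhds (ℙ (⋃ n, {ω | ∃ k ≤ n, C ≤ ∑ i ∈ Finset.range k, Y i ω}))) :=
    tendsto_measure_iUnion_atTop humono
  have hone : ℙ (⋃ n, {ω | ∃ k ≤ n, C ≤ ∑ i ∈ Finset.range k, Y i ω}) = 1 := by
    refine le_antisymm prob_le_one ?_
    rw [← hUplus]
    apply measure_mono
    intro ω hω
    rw [Set.mem_iInter] at hω
    obtain ⟨n, hn⟩ := Set.mem_iUnion.1 (hω ⌈C⌉₊)
    simp only [Set.mem_setOf_eq] at hn
    have hCle : C ≤ (⌈C⌉₊ : ℝ) := Nat.le_ceil C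
    exact Set.mem_iUnion.2 ⟨n, ⟨n, le_rfl, by linarith⟩⟩
  rw [hone] at hulim
  have hlowlim : Tendsto (fun n => ℙ {ω | ∃ k ≤ n, C ≤ ∑ i ∈ Finset.range k, Y i ω} / 2)
      atTop (nhds (1/2)) := by
    simp only [div_eq_mul_inv]
    have := ENNReal.Tendsto.mul_const hulim (b := (2:ℝ≥0∞)⁻¹) (Or.inl one_ne_zero)
    simpa using this
  have hfirst : Tendsto (fun n => ℙ {ω | C ≤ ∑ i ∈ Finset.range n, Y i ω})
      atTop (nhds (1/2)) :=
    tendsto_of_tendsto_of_tendsto_of_le_of_le hlowlim tendsto_const_nhds hlow hup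
  constructor
  · exact hfirst
  · have heq : (fun n => ℙ {ω | ∑ i ∈ Finset.range n, Y i ω ≤ -C})
        = (fun n => ℙ {ω | C ≤ ∑ i ∈ Finset.range n, Y i ω}) := funext hsymC
    show Tendsto (fun n => ℙ {ω | ∑ i ∈ Finset.range n, Y i ω ≤ -C}) atTop (nhds (1/2))
    rw [heq]
    exact hfirst
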